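/- Let N be a positive integer and let f be a trigonometric polynomial of degree d. Then |‖f‖_{L^1([0,1])} − (1/N) ∑_{j=1}^N |f(j/N)|| ≤ (4πd/N) · ‖f‖_{L^1([0,1])}. -/

import Mathlib

/-!
Write `f' = f ∗ K` on the circle, where `K(u) = 2πi (e(du) − e(−du)) |∑_{k<d} e(ku)|²` has
Fourier coefficients `2πin` for `|n| ≤ d`. Since `|K| ≤ 4π |∑_{k<d} e(ku)|²` and the latter has
integral `d` by Parseval, Young's inequality gives Bernstein's inequality `‖f'‖₁ ≤ 4πd ‖f‖₁`.
On each cell `[(j-1)/N, j/N]` the function `|f|` differs from `|f(j/N)|` by at most the integral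
of `|f'|` over the cell, so the quadrature error is at most `‖f'‖₁ / N`.
-/

open MeasureTheory

/-- `e z = e^{2πiz}`. -/
noncomputable def e (x : ℝ) : ℂ := Complex.exp (2 * Real.pi * Complex.I * x)

open Finset Complex
open scoped Real ComplexConjugate

@[fun_prop]
lemma continuous_e : Continuous e := by unfold e; fun_prop

lemma e_add (x y : ℝ) : e (x + y) = e x * e y := by
  simp only [e, ← Complex.exp_add, ofReal_add]; ring_nf

lemma conj_e (x : ℝ) : conj (e x) = e (-x) := by
  simp only [e, ← Complex.exp_conj, map_mul, conj_I, conj_ofReal, map_ofNat, ofReal_neg]; ring_nf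

lemma e_zero : e 0 = 1 := by simp [e]

lemma norm_e (x : ℝ) : ‖e x‖ = 1 := by
  simp [e, Complex.norm_exp]

lemma e_intCast (m : ℤ) : e m = 1 := by
  simpa [e, mul_comm] using Complex.exp_int_mul_two_pi_mul_I m

lemma hasDerivAt_e_mul (c t : ℝ) :
    HasDerivAt (fun x => e (c * x)) (2 * π * I * c * e (c * t)) t := by
  have := (((hasDerivAt_id (t : ℂ)).const_mul (2 * π * I * c)).comp_ofReal).cexp
  simp only [e, ofReal_mul, ← mul_assoc]
  simpa [mul_comm] using this

lemma integral_e_intCast_mul (m : ℤ) :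
    ∫ u in (0 : ℝ)..1, e (m * u) = if m = 0 then 1 else 0 := by
  split_ifs with hm
  · simp [hm, e]
  · have hc : 2 * π * I * m ≠ 0 := by simp [Real.pi_ne_zero, hm]
    simp only [e, ofReal_mul, ofReal_intCast, ← mul_assoc]
    rw [integral_exp_mul_complex hc]
    simp [mul_comm _ (m : ℂ), Complex.exp_int_mul_two_pi_mul_I]

noncomputable def trigPoly (d : ℕ) (a : ℤ → ℂ) (t : ℝ) : ℂ :=
  ∑ n ∈ Icc (-(d : ℤ)) d, a n * e (n * t)

section trigPoly

variable (d : ℕ) (a : ℤ → ℂ)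

lemma continuous_trigPoly : Continuous (trigPoly d a) := by
  unfold trigPoly; fun_prop

lemma periodic_trigPoly : Function.Periodic (trigPoly d a) 1 := by
  intro t
  simp only [trigPoly, mul_add, mul_one, e_add, e_intCast]

lemma hasDerivAt_trigPoly (t : ℝ) :
    HasDerivAt (trigPoly d a) (trigPoly d (fun n => 2 * π * I * n * a n) t) t := by
  unfold trigPoly
  refine HasDerivAt.fun_sum fun n _ => ?_
  exact ((hasDerivAt_e_mul n t).const_mul (a n)).congr_deriv (by push_cast; ring)

lemma integral_trigPoly_sub_mul {K : ℝ → ℂ} (hK : Continuous K) (t : ℝ) :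
    ∫ u in (0 : ℝ)..1, trigPoly d a (t - u) * K u
      = trigPoly d (fun n => a n * ∫ u in (0 : ℝ)..1, e (-n * u) * K u) t := by
  have hsplit (u : ℝ) : trigPoly d a (t - u) * K u
      = ∑ n ∈ Icc (-(d : ℤ)) d, a n * e (n * t) * (e (-n * u) * K u) := by
    rw [trigPoly, sum_mul]
    refine sum_congr rfl fun n _ => ?_
    rw [show (n : ℝ) * (t - u) = n * t + -n * u by ring, e_add]
    ring
  simp_rw [hsplit]
  rw [trigPoly, intervalIntegral.integral_finsetSum fun n _ =>
    (by fun_prop : Continuous _).intervalIntegrable _ _]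
  refine sum_congr rfl fun n _ => ?_
  rw [intervalIntegral.integral_const_mul]; ring

end trigPoly

lemma Function.Periodic.intervalIntegral_comp_sub_right {E : Type*} [NormedAddCommGroup E]
    [NormedSpace ℝ E] {g : ℝ → E} {T : ℝ} (hg : Function.Periodic g T) (u : ℝ) :
    ∫ t in (0 : ℝ)..T, g (t - u) = ∫ t in (0 : ℝ)..T, g t := by
  rw [intervalIntegral.integral_comp_sub_right, zero_sub, sub_eq_neg_add,
    hg.intervalIntegral_add_eq (-u) 0, zero_add]

lemma integral_norm_integral_sub_mul_le {f K : ℝ → ℂ} (hf : Continuous f)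
    (hper : Function.Periodic f 1) (hK : Continuous K) :
    ∫ t in (0 : ℝ)..1, ‖∫ u in (0 : ℝ)..1, f (t - u) * K u‖
      ≤ (∫ t in (0 : ℝ)..1, ‖f t‖) * ∫ u in (0 : ℝ)..1, ‖K u‖ := by
  have hF : IntegrableOn (Function.uncurry fun t u => ‖f (t - u)‖ * ‖K u‖)
      (Set.uIoc 0 1 ×ˢ Set.uIoc 0 1) := by
    have hcpt : IsCompact (Set.Icc (0 : ℝ) 1 ×ˢ Set.Icc (0 : ℝ) 1) :=
      isCompact_Icc.prod isCompact_Icc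
    refine (ContinuousOn.integrableOn_compact hcpt (by fun_prop)).mono_set ?_
    simp only [Set.uIoc_of_le zero_le_one]
    exact Set.prod_mono Set.Ioc_subset_Icc_self Set.Ioc_subset_Icc_self
  have hconv : Continuous fun t => ‖∫ u in (0 : ℝ)..1, f (t - u) * K u‖ := by fun_prop
  have hbound : Continuous fun t => ∫ u in (0 : ℝ)..1, ‖f (t - u)‖ * ‖K u‖ := by fun_prop
  calc ∫ t in (0 : ℝ)..1, ‖∫ u in (0 : ℝ)..1, f (t - u) * K u‖
      ≤ ∫ t in (0 : ℝ)..1, ∫ u in (0 : ℝ)..1, ‖f (t - u)‖ * ‖K u‖ := by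
        refine intervalIntegral.integral_mono_on zero_le_one (hconv.intervalIntegrable _ _)
          (hbound.intervalIntegrable _ _) fun t _ => ?_
        simpa only [norm_mul] using
          intervalIntegral.norm_integral_le_integral_norm (f := fun u => f (t - u) * K u)
            zero_le_one
    _ = ∫ u in (0 : ℝ)..1, (∫ t in (0 : ℝ)..1, ‖f (t - u)‖) * ‖K u‖ := by
        rw [intervalIntegral_intervalIntegral_swap hF]
        simp only [intervalIntegral.integral_mul_const]
    _ = (∫ t in (0 : ℝ)..1, ‖f t‖) * ∫ u in (0 : ℝ)..1, ‖K u‖ := by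
        rw [← intervalIntegral.integral_const_mul]
        congr with u
        rw [Function.Periodic.intervalIntegral_comp_sub_right (g := fun t => ‖f t‖)
          (hper.comp norm)]

noncomputable def dirichletSum (d : ℕ) (u : ℝ) : ℂ := ∑ k ∈ range d, e (k * u)

noncomputable def bernsteinKernel (d : ℕ) (u : ℝ) : ℂ :=
  2 * π * I * (e (d * u) - e (-d * u)) * ‖dirichletSum d u‖ ^ 2

lemma card_filter_sub_eq (d : ℕ) (c : ℤ) :
    #{p ∈ range d ×ˢ range d | (p.2 : ℤ) - p.1 = c} = d - c.natAbs := by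
  have hinj : Function.Injective fun j : ℕ => (j, (c + j).toNat) :=
    fun _ _ h => (Prod.ext_iff.1 h).1
  have hpairs : {p ∈ range d ×ˢ range d | (p.2 : ℤ) - p.1 = c}
      = (Ico (-c).toNat (d - c.toNat)).map ⟨_, hinj⟩ := by
    ext ⟨j, k⟩
    simp only [mem_filter, mem_product, mem_range, mem_map, mem_Ico, Function.Embedding.coeFn_mk,
      Prod.mk.injEq]
    constructor
    · rintro ⟨⟨hj, hk⟩, hc⟩
      exact ⟨j, by omega, rfl, by omega⟩
    · rintro ⟨j, hj, rfl, rfl⟩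
      omega
  rw [hpairs, card_map, Nat.card_Ico]
  omega

section kernel

variable (d : ℕ)

@[fun_prop]
lemma continuous_dirichletSum : Continuous (dirichletSum d) := by
  unfold dirichletSum; fun_prop

lemma continuous_bernsteinKernel : Continuous (bernsteinKernel d) := by
  unfold bernsteinKernel; fun_prop

lemma norm_sq_dirichletSum (u : ℝ) :
    (‖dirichletSum d u‖ : ℂ) ^ 2 = ∑ j ∈ range d, ∑ k ∈ range d, e (((j : ℤ) - k : ℤ) * u) := by
  rw [← mul_conj', dirichletSum, map_sum, sum_mul_sum]
  refine sum_congr rfl fun j _ => sum_congr rfl fun k _ => ?_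
  rw [conj_e, ← e_add]
  push_cast; ring_nf

lemma integral_e_mul_norm_sq_dirichletSum (c : ℤ) :
    ∫ u in (0 : ℝ)..1, e (c * u) * ‖dirichletSum d u‖ ^ 2 = ((d - c.natAbs : ℕ) : ℂ) := by
  have hterm (j k : ℕ) (u : ℝ) :
      e (c * u) * e (((j : ℤ) - k : ℤ) * u) = e ((c + j - k : ℤ) * u) := by
    rw [← e_add]; push_cast; ring_nf
  simp_rw [norm_sq_dirichletSum, mul_sum, hterm]
  have hinner (j : ℕ) : ∫ u in (0 : ℝ)..1, ∑ k ∈ range d, e ((c + j - k : ℤ) * u)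
      = ∑ k ∈ range d, if c + j - k = 0 then 1 else 0 := by
    rw [intervalIntegral.integral_finsetSum fun k _ =>
      (by fun_prop : Continuous _).intervalIntegrable _ _]
    simp_rw [integral_e_intCast_mul]
  rw [intervalIntegral.integral_finsetSum fun j _ =>
    (by fun_prop : Continuous _).intervalIntegrable _ _]
  simp_rw [hinner]
  rw [← card_filter_sub_eq, ← sum_product', sum_boole]
  exact congrArg (fun s => (#s : ℂ)) (filter_congr fun p _ => by omega)

lemma integral_norm_sq_dirichletSum : ∫ u in (0 : ℝ)..1, ‖dirichletSum d u‖ ^ 2 = d := by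
  have h := integral_e_mul_norm_sq_dirichletSum d 0
  simp only [Int.cast_zero, zero_mul, e_zero, one_mul, Int.natAbs_zero, tsub_zero] at h
  rw [← Complex.ofReal_inj, ← intervalIntegral.integral_ofReal]
  push_cast
  exact h

lemma norm_bernsteinKernel_le (u : ℝ) :
    ‖bernsteinKernel d u‖ ≤ 4 * π * ‖dirichletSum d u‖ ^ 2 := by
  have hdiff : ‖e (d * u) - e (-d * u)‖ ≤ 2 := by
    simpa [norm_e, one_add_one_eq_two] using norm_sub_le (e (d * u)) (e (-d * u))
  rw [bernsteinKernel]
  simp only [norm_mul, norm_pow, Complex.norm_real, norm_norm, norm_I, Complex.norm_ofNat,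
    Real.norm_of_nonneg Real.pi_pos.le]
  have := mul_le_mul_of_nonneg_left hdiff (by positivity : 0 ≤ 2 * π * ‖dirichletSum d u‖ ^ 2)
  linarith

lemma integral_norm_bernsteinKernel_le : ∫ u in (0 : ℝ)..1, ‖bernsteinKernel d u‖ ≤ 4 * π * d := by
  calc ∫ u in (0 : ℝ)..1, ‖bernsteinKernel d u‖
      ≤ ∫ u in (0 : ℝ)..1, 4 * π * ‖dirichletSum d u‖ ^ 2 :=
        intervalIntegral.integral_mono_on zero_le_one
          ((continuous_bernsteinKernel d).norm.intervalIntegrable _ _)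
          ((by fun_prop : Continuous _).intervalIntegrable _ _)
          fun u _ => norm_bernsteinKernel_le d u
    _ = 4 * π * d := by
        rw [intervalIntegral.integral_const_mul, integral_norm_sq_dirichletSum]

lemma integral_e_neg_mul_bernsteinKernel {n : ℤ} (hn : n ∈ Icc (-(d : ℤ)) d) :
    ∫ u in (0 : ℝ)..1, e (-n * u) * bernsteinKernel d u = 2 * π * I * n := by
  have hsplit (u : ℝ) : e (-n * u) * bernsteinKernel d u = 2 * π * I *
      (e ((d - n : ℤ) * u) * ‖dirichletSum d u‖ ^ 2
        - e ((-d - n : ℤ) * u) * ‖dirichletSum d u‖ ^ 2) := by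
    rw [bernsteinKernel]
    push_cast
    rw [show ((d : ℝ) - n) * u = d * u + -n * u by ring,
      show (-(d : ℝ) - n) * u = -d * u + -n * u by ring, e_add, e_add]
    ring
  simp_rw [hsplit]
  rw [intervalIntegral.integral_const_mul, intervalIntegral.integral_sub
    ((by fun_prop : Continuous _).intervalIntegrable _ _)
    ((by fun_prop : Continuous _).intervalIntegrable _ _),
    integral_e_mul_norm_sq_dirichletSum, integral_e_mul_norm_sq_dirichletSum]
  rw [mem_Icc] at hn
  congr 1
  have hcount : ((d - (d - n : ℤ).natAbs : ℕ) : ℤ) - ((d - (-d - n : ℤ).natAbs : ℕ) : ℤ) = n := by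
    omega
  exact_mod_cast congrArg (fun z : ℤ => (z : ℂ)) hcount

end kernel

theorem integral_norm_trigPoly_deriv_le (d : ℕ) (a : ℤ → ℂ) :
    ∫ t in (0 : ℝ)..1, ‖trigPoly d (fun n => 2 * π * I * n * a n) t‖
      ≤ 4 * π * d * ∫ t in (0 : ℝ)..1, ‖trigPoly d a t‖ := by
  have hconv (t : ℝ) : trigPoly d (fun n => 2 * π * I * n * a n) t
      = ∫ u in (0 : ℝ)..1, trigPoly d a (t - u) * bernsteinKernel d u := by
    rw [integral_trigPoly_sub_mul d a (continuous_bernsteinKernel d), trigPoly, trigPoly]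
    refine sum_congr rfl fun n hn => ?_
    rw [integral_e_neg_mul_bernsteinKernel d hn]
    ring
  calc ∫ t in (0 : ℝ)..1, ‖trigPoly d (fun n => 2 * π * I * n * a n) t‖
      = ∫ t in (0 : ℝ)..1, ‖∫ u in (0 : ℝ)..1, trigPoly d a (t - u) * bernsteinKernel d u‖ := by
        simp_rw [hconv]
    _ ≤ (∫ t in (0 : ℝ)..1, ‖trigPoly d a t‖) * ∫ u in (0 : ℝ)..1, ‖bernsteinKernel d u‖ :=
        integral_norm_integral_sub_mul_le (continuous_trigPoly d a) (periodic_trigPoly d a)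
          (continuous_bernsteinKernel d)
    _ ≤ (∫ t in (0 : ℝ)..1, ‖trigPoly d a t‖) * (4 * π * d) := by
        gcongr
        · exact intervalIntegral.integral_nonneg zero_le_one fun _ _ => norm_nonneg _
        · exact integral_norm_bernsteinKernel_le d
    _ = 4 * π * d * ∫ t in (0 : ℝ)..1, ‖trigPoly d a t‖ := mul_comm _ _

section quadrature

variable {E : Type*} [NormedAddCommGroup E] [NormedSpace ℝ E] [CompleteSpace E] {f f' : ℝ → E}

lemma abs_integral_norm_sub_mul_norm_le (hf : ∀ x, HasDerivAt f (f' x) x) (hf' : Continuous f')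
    {s t : ℝ} (hst : s ≤ t) :
    |(∫ x in s..t, ‖f x‖) - (t - s) * ‖f t‖| ≤ (t - s) * ∫ x in s..t, ‖f' x‖ := by
  have hfc : Continuous f := continuous_iff_continuousAt.2 fun x => (hf x).continuousAt
  have hosc : ∀ x ∈ Set.uIoc s t, ‖‖f x‖ - ‖f t‖‖ ≤ ∫ y in s..t, ‖f' y‖ := by
    intro x hx
    rw [Set.uIoc_of_le hst] at hx
    calc ‖‖f x‖ - ‖f t‖‖ ≤ ‖f t - f x‖ := by
          rw [Real.norm_eq_abs, abs_sub_comm]; exact abs_norm_sub_norm_le _ _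
      _ = ‖∫ y in x..t, f' y‖ := by
          rw [intervalIntegral.integral_eq_sub_of_hasDerivAt (fun y _ => hf y)
            (hf'.intervalIntegrable _ _)]
      _ ≤ ∫ y in x..t, ‖f' y‖ := intervalIntegral.norm_integral_le_integral_norm hx.2
      _ ≤ ∫ y in s..t, ‖f' y‖ :=
          intervalIntegral.integral_mono_interval hx.1.le hx.2 le_rfl
            (Filter.Eventually.of_forall fun _ => norm_nonneg _) (hf'.norm.intervalIntegrable _ _)
  calc |(∫ x in s..t, ‖f x‖) - (t - s) * ‖f t‖| = ‖∫ x in s..t, (‖f x‖ - ‖f t‖)‖ := by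
        rw [intervalIntegral.integral_sub (hfc.norm.intervalIntegrable _ _)
          intervalIntegrable_const, intervalIntegral.integral_const, smul_eq_mul, Real.norm_eq_abs]
    _ ≤ (∫ y in s..t, ‖f' y‖) * |t - s| := intervalIntegral.norm_integral_le_of_norm_le_const hosc
    _ = (t - s) * ∫ x in s..t, ‖f' x‖ := by rw [abs_of_nonneg (sub_nonneg.2 hst), mul_comm]

lemma abs_integral_norm_sub_riemannSum_le (hf : ∀ x, HasDerivAt f (f' x) x) (hf' : Continuous f')
    {N : ℕ} (hN : 0 < N) :
    |(∫ t in (0 : ℝ)..1, ‖f t‖) - (1 / (N : ℝ)) * ∑ j ∈ Icc 1 N, ‖f ((j : ℝ) / N)‖|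
      ≤ (1 / (N : ℝ)) * ∫ t in (0 : ℝ)..1, ‖f' t‖ := by
  have hfc : Continuous f := continuous_iff_continuousAt.2 fun x => (hf x).continuousAt
  set x : ℕ → ℝ := fun k => k / N
  have hx0 : x 0 = 0 := by simp [x]
  have hxN : x N = 1 := div_self (Nat.cast_ne_zero.2 hN.ne')
  have hstep (k : ℕ) : x (k + 1) - x k = 1 / N := by
    simp only [x]; push_cast; ring
  have hcells (g : ℝ → ℝ) (hg : Continuous g) :
      ∫ t in (0 : ℝ)..1, g t = ∑ k ∈ range N, ∫ t in x k..x (k + 1), g t := by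
    rw [intervalIntegral.sum_integral_adjacent_intervals fun k _ => hg.intervalIntegrable _ _,
      hx0, hxN]
  have hnodes : ∑ j ∈ Icc 1 N, ‖f ((j : ℝ) / N)‖ = ∑ k ∈ range N, ‖f (x (k + 1))‖ := by
    rw [range_eq_Ico, sum_Ico_add' (fun j => ‖f (x j)‖), zero_add, ← Ico_add_one_right_eq_Icc]
  rw [hcells _ hfc.norm, hcells _ hf'.norm, hnodes, mul_sum, mul_sum, ← sum_sub_distrib]
  refine (abs_sum_le_sum_abs _ _).trans (sum_le_sum fun k _ => ?_)
  have hle : x k ≤ x (k + 1) := by simp only [x]; gcongr; simp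
  have h := abs_integral_norm_sub_mul_norm_le hf hf' hle
  rwa [hstep] at h

end quadrature

/-- Lemma 3.2: for a trigonometric polynomial `f` of degree `d` and a positive integer `N`,
`|‖f‖_{L^1} − (1/N) ∑_{j=1}^N |f(j/N)|| ≤ (4πd/N) ‖f‖_{L^1}`. -/
theorem quadrature_error
    (d : ℕ) (a : ℤ → ℂ) (f : ℝ → ℂ)
    (hf : ∀ t : ℝ, f t = ∑ n ∈ Finset.Icc (-(d : ℤ)) (d : ℤ), a n * e ((n : ℝ) * t))
    (N : ℕ) (hN : 0 < N) :
    |(∫ t in (0:ℝ)..1, ‖f t‖) - (1 / (N : ℝ)) * ∑ j ∈ Finset.Icc 1 N, ‖f ((j : ℝ) / N)‖| ≤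
      (4 * Real.pi * d / N) * ∫ t in (0:ℝ)..1, ‖f t‖ := by
  obtain rfl : f = trigPoly d a := funext hf
  calc _ ≤ (1 / (N : ℝ)) * ∫ t in (0 : ℝ)..1, ‖trigPoly d (fun n => 2 * π * I * n * a n) t‖ :=
        abs_integral_norm_sub_riemannSum_le (hasDerivAt_trigPoly d a)
          (continuous_trigPoly d _) hN
    _ ≤ (1 / (N : ℝ)) * (4 * π * d * ∫ t in (0 : ℝ)..1, ‖trigPoly d a t‖) := by
        gcongr
        exact integral_norm_trigPoly_deriv_le d a
    _ = (4 * π * d / N) * ∫ t in (0 : ℝ)..1, ‖trigPoly d a t‖ := by ring
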